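/- arXiv:1901.10625 — 2 statements merged into one kernel-verified Lean document; each statement's English description precedes it below -/
import Mathlib

section
/- (Lemma 2.1(iv)) Given two admissible 1D primitive states U⁻ and U⁺ with the HLLC wave speeds s⁻ = min(s_min(U⁻), s_min(U⁺)) and s⁺ = max(s_max(U⁻), s_max(U⁺)), the quantities A∓ and B∓ satisfy s⁺A⁻ - B⁻ < 0 and s⁻A⁺ - B⁺ < 0. -/
noncomputable section

namespace SRHD1D

/-- Lorentz factor `γ = (1 - u²)^(-1/2)`. -/
def lorentz (u : ℝ) : ℝ := 1 / Real.sqrt (1 - u ^ 2)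

/-- Specific enthalpy `h = 1 + Γ p / ((Γ - 1) ρ)` of a perfect gas. -/
def enthalpy (G r p : ℝ) : ℝ := 1 + G * p / ((G - 1) * r)

/-- Sound speed `c_s = √(Γ p / (ρ h))`. -/
def soundSpeed (G r p : ℝ) : ℝ := Real.sqrt (G * p / (r * enthalpy G r p))

/-- Conserved rest-mass density `D = ρ γ`. -/
def Dc (r u : ℝ) : ℝ := r * lorentz u

/-- Conserved momentum `m = ρ h γ² u`. -/
def mc (G r u p : ℝ) : ℝ := r * enthalpy G r p * lorentz u ^ 2 * u

/-- Conserved total energy `E = ρ h γ² - p`. -/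
def Ec (G r u p : ℝ) : ℝ := r * enthalpy G r p * lorentz u ^ 2 - p

/-- Minimum characteristic speed `s_min = (u - c_s)/(1 - c_s u)`. -/
def sMin (G r u p : ℝ) : ℝ := (u - soundSpeed G r p) / (1 - soundSpeed G r p * u)

/-- Maximum characteristic speed `s_max = (u + c_s)/(1 + c_s u)`. -/
def sMax (G r u p : ℝ) : ℝ := (u + soundSpeed G r p) / (1 + soundSpeed G r p * u)

/-!
Multiplying by `1 - u² = γ⁻²` and writing `q = ρ h`, the quantity
`t (s E - m) - (m (s - u) - p)` becomes `q (s - u) (t - u) + p (1 - s t) (1 - u²)`, which is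
bilinear in `(s, t)`. It is therefore negative on the whole rectangle `[-1, s_min] × [s_max, 1]`
once it is negative at the four corners, where it factors and its sign reduces to
`c_s² < Γ - 1 ≤ 1`, i.e. `p (1 + c_s²) < q c_s²`. The pair `(s⁻, s⁺)` lies in the rectangle of
both `U⁻` and `U⁺`, and the form is symmetric in `s`, `t`.
-/

lemma affine_neg_of_endpoints {k m x₀ x₁ x : ℝ} (hx₀ : x₀ ≤ x) (hx₁ : x ≤ x₁)
    (h₀ : k * x₀ + m < 0) (h₁ : k * x₁ + m < 0) : k * x + m < 0 := by
  rcases le_total 0 k with hk | hk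
  · linarith [mul_le_mul_of_nonneg_left hx₁ hk]
  · linarith [mul_le_mul_of_nonpos_left hx₀ hk]

lemma bilinear_neg_of_corners {α β γ δ s₀ s₁ t₀ t₁ s t : ℝ}
    (hs₀ : s₀ ≤ s) (hs₁ : s ≤ s₁) (ht₀ : t₀ ≤ t) (ht₁ : t ≤ t₁)
    (h₀₀ : α * s₀ * t₀ + β * s₀ + γ * t₀ + δ < 0)
    (h₀₁ : α * s₀ * t₁ + β * s₀ + γ * t₁ + δ < 0)
    (h₁₀ : α * s₁ * t₀ + β * s₁ + γ * t₀ + δ < 0)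
    (h₁₁ : α * s₁ * t₁ + β * s₁ + γ * t₁ + δ < 0) :
    α * s * t + β * s + γ * t + δ < 0 := by
  have at_s₀ : (α * s₀ + γ) * t + (β * s₀ + δ) < 0 :=
    affine_neg_of_endpoints ht₀ ht₁ (by linarith) (by linarith)
  have at_s₁ : (α * s₁ + γ) * t + (β * s₁ + δ) < 0 :=
    affine_neg_of_endpoints ht₀ ht₁ (by linarith) (by linarith)
  have := affine_neg_of_endpoints (k := α * t + β) (m := γ * t + δ) hs₀ hs₁
    (by linarith) (by linarith)
  linarith

section Kinematics

variable {u c : ℝ}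

lemma one_sub_mul_pos (hu : |u| < 1) (hc₀ : 0 ≤ c) (hc₁ : c < 1) : 0 < 1 - c * u := by
  have := abs_lt.mp hu; nlinarith

lemma one_add_mul_pos (hu : |u| < 1) (hc₀ : 0 ≤ c) (hc₁ : c < 1) : 0 < 1 + c * u := by
  have := abs_lt.mp hu; nlinarith

lemma neg_one_lt_velSub (hu : |u| < 1) (hc₀ : 0 ≤ c) (hc₁ : c < 1) :
    -1 < (u - c) / (1 - c * u) := by
  rw [lt_div_iff₀ (one_sub_mul_pos hu hc₀ hc₁)]
  have := abs_lt.mp hu; nlinarith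

lemma velAdd_lt_one (hu : |u| < 1) (hc₀ : 0 ≤ c) (hc₁ : c < 1) :
    (u + c) / (1 + c * u) < 1 := by
  rw [div_lt_iff₀ (one_add_mul_pos hu hc₀ hc₁)]
  have := abs_lt.mp hu; nlinarith

lemma cross_form_neg {q p a b s t : ℝ} (hp : 0 < p) (hu : |u| < 1) (hc₀ : 0 < c) (hc₁ : c < 1)
    (hpq : p * (1 + c ^ 2) < q * c ^ 2)
    (ha : a * (1 - c * u) = u - c) (hb : b * (1 + c * u) = u + c)
    (hs₀ : -1 ≤ s) (hs₁ : s ≤ a) (ht₀ : b ≤ t) (ht₁ : t ≤ 1) :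
    q * (s - u) * (t - u) + p * (1 - s * t) * (1 - u ^ 2) < 0 := by
  obtain ⟨hu_gt, hu_lt⟩ := abs_lt.mp hu
  have hu_sq : 0 < 1 - u ^ 2 := by nlinarith
  have hd₁ := one_sub_mul_pos hu hc₀.le hc₁
  have hd₂ := one_add_mul_pos hu hc₀.le hc₁
  have hpq₁ : p * (1 + c) < q * c := by nlinarith
  have hpq₂ : 2 * p < q := by nlinarith
  have corner_a_b :
      (q * (a - u) * (b - u) + p * (1 - a * b) * (1 - u ^ 2)) * ((1 - c * u) * (1 + c * u))
        = (1 - u ^ 2) ^ 2 * (p * (1 + c ^ 2) - q * c ^ 2) := by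
    linear_combination
      (q * (b * (1 + c * u) - u * (1 + c * u)) - p * (1 - u ^ 2) * b * (1 + c * u)) * ha
        + (q * ((u - c) - u * (1 - c * u)) - p * (1 - u ^ 2) * (u - c)) * hb
  have corner_a_one : (q * (a - u) * (1 - u) + p * (1 - a * 1) * (1 - u ^ 2)) * (1 - c * u)
      = (1 - u) * (1 - u ^ 2) * (p * (1 + c) - q * c) := by
    linear_combination (q * (1 - u) - p * (1 - u ^ 2)) * ha
  have corner_neg_one_b :
      (q * (-1 - u) * (b - u) + p * (1 - -1 * b) * (1 - u ^ 2)) * (1 + c * u)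
        = (1 + u) * (1 - u ^ 2) * (p * (1 + c) - q * c) := by
    linear_combination (q * (-1 - u) + p * (1 - u ^ 2)) * hb
  have h₀₀ : q * (-1 - u) * (b - u) + p * (1 - -1 * b) * (1 - u ^ 2) < 0 := by
    refine neg_of_mul_neg_left ?_ hd₂.le
    rw [corner_neg_one_b]
    exact mul_neg_of_pos_of_neg (by nlinarith) (by linarith)
  have h₀₁ : q * (-1 - u) * (1 - u) + p * (1 - -1 * 1) * (1 - u ^ 2) < 0 := by nlinarith
  have h₁₀ : q * (a - u) * (b - u) + p * (1 - a * b) * (1 - u ^ 2) < 0 := by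
    refine neg_of_mul_neg_left ?_ (mul_pos hd₁ hd₂).le
    rw [corner_a_b]
    exact mul_neg_of_pos_of_neg (by positivity) (by linarith)
  have h₁₁ : q * (a - u) * (1 - u) + p * (1 - a * 1) * (1 - u ^ 2) < 0 := by
    refine neg_of_mul_neg_left ?_ hd₁.le
    rw [corner_a_one]
    exact mul_neg_of_pos_of_neg (by nlinarith) (by linarith)
  have := bilinear_neg_of_corners (α := q - p * (1 - u ^ 2)) (β := -(q * u)) (γ := -(q * u))
    (δ := q * u ^ 2 + p * (1 - u ^ 2)) hs₀ hs₁ ht₀ ht₁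
    (by linarith) (by linarith) (by linarith) (by linarith)
  linarith

end Kinematics

section PerfectGas

variable {G r u p : ℝ}

lemma enthalpy_pos (hG : 1 < G) (hr : 0 < r) (hp : 0 ≤ p) : 0 < enthalpy G r p := by
  have : 0 ≤ G * p / ((G - 1) * r) := div_nonneg (by positivity) (by nlinarith)
  unfold enthalpy
  linarith

lemma lorentz_sq_mul_one_sub_sq (hu : |u| < 1) : lorentz u ^ 2 * (1 - u ^ 2) = 1 := by
  have : 0 < 1 - u ^ 2 := by have := abs_lt.mp hu; nlinarith
  rw [lorentz, div_pow, one_pow, Real.sq_sqrt this.le, one_div_mul_cancel this.ne']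

lemma Ec_mul_one_sub_sq (hu : |u| < 1) :
    Ec G r u p * (1 - u ^ 2) = r * enthalpy G r p - p * (1 - u ^ 2) := by
  rw [Ec]
  linear_combination r * enthalpy G r p * lorentz_sq_mul_one_sub_sq hu

lemma mc_mul_one_sub_sq (hu : |u| < 1) :
    mc G r u p * (1 - u ^ 2) = r * enthalpy G r p * u := by
  rw [mc]
  linear_combination r * enthalpy G r p * u * lorentz_sq_mul_one_sub_sq hu

lemma soundSpeed_pos (hG : 1 < G) (hr : 0 < r) (hp : 0 < p) : 0 < soundSpeed G r p :=
  Real.sqrt_pos.mpr (div_pos (by positivity) (mul_pos hr (enthalpy_pos hG hr hp.le)))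

lemma soundSpeed_sq_mul (hG : 1 < G) (hr : 0 < r) (hp : 0 ≤ p) :
    soundSpeed G r p ^ 2 * (r * enthalpy G r p) = G * p := by
  have hq := mul_pos hr (enthalpy_pos hG hr hp)
  rw [soundSpeed, Real.sq_sqrt (div_nonneg (by positivity) hq.le), div_mul_cancel₀ _ hq.ne']

lemma soundSpeed_sq_lt (hG : 1 < G) (hr : 0 < r) (hp : 0 ≤ p) :
    soundSpeed G r p ^ 2 < G - 1 := by
  have hq := mul_pos hr (enthalpy_pos hG hr hp)
  have hqG : (G - 1) * (r * enthalpy G r p) = (G - 1) * r + G * p := by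
    unfold enthalpy
    have : G - 1 ≠ 0 := by linarith
    field_simp
  refine lt_of_mul_lt_mul_right ?_ hq.le
  rw [soundSpeed_sq_mul hG hr hp, hqG]
  nlinarith

lemma soundSpeed_lt_one (hG₁ : 1 < G) (hG₂ : G ≤ 2) (hr : 0 < r) (hp : 0 ≤ p) :
    soundSpeed G r p < 1 := by
  have hc₀ : 0 ≤ soundSpeed G r p := Real.sqrt_nonneg _
  exact (sq_lt_one_iff₀ hc₀).mp (by linarith [soundSpeed_sq_lt hG₁ hr hp])

lemma neg_one_lt_sMin (hG₁ : 1 < G) (hG₂ : G ≤ 2) (hr : 0 < r) (hu : |u| < 1) (hp : 0 ≤ p) :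
    -1 < sMin G r u p :=
  neg_one_lt_velSub hu (Real.sqrt_nonneg _) (soundSpeed_lt_one hG₁ hG₂ hr hp)

lemma sMax_lt_one (hG₁ : 1 < G) (hG₂ : G ≤ 2) (hr : 0 < r) (hu : |u| < 1) (hp : 0 ≤ p) :
    sMax G r u p < 1 :=
  velAdd_lt_one hu (Real.sqrt_nonneg _) (soundSpeed_lt_one hG₁ hG₂ hr hp)

lemma cross_neg_of_le_sMin_of_sMax_le (hG₁ : 1 < G) (hG₂ : G ≤ 2) (hr : 0 < r) (hu : |u| < 1)
    (hp : 0 < p) {s t : ℝ} (hs₀ : -1 ≤ s)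
    (hs : s ≤ sMin G r u p) (ht : sMax G r u p ≤ t) (ht₁ : t ≤ 1) :
    t * (s * Ec G r u p - mc G r u p) - (mc G r u p * (s - u) - p) < 0 := by
  have hc₀ := soundSpeed_pos hG₁ hr hp
  have hc₁ := soundSpeed_lt_one hG₁ hG₂ hr hp.le
  have hpq : p * (1 + soundSpeed G r p ^ 2) < r * enthalpy G r p * soundSpeed G r p ^ 2 := by
    rw [mul_comm (r * _), soundSpeed_sq_mul hG₁ hr hp.le]
    nlinarith [soundSpeed_sq_lt hG₁ hr hp.le]
  have hform := cross_form_neg hp hu hc₀ hc₁ hpq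
    (div_mul_cancel₀ _ (one_sub_mul_pos hu hc₀.le hc₁).ne')
    (div_mul_cancel₀ _ (one_add_mul_pos hu hc₀.le hc₁).ne') hs₀ hs ht ht₁
  refine neg_of_mul_neg_left ?_ (by nlinarith [abs_lt.mp hu] : (0 : ℝ) ≤ 1 - u ^ 2)
  linear_combination hform + s * t * Ec_mul_one_sub_sq (G := G) (r := r) (p := p) hu
    + (u - s - t) * mc_mul_one_sub_sq (G := G) (r := r) (p := p) hu

end PerfectGas

theorem hllc_cross_sA_sub_B_neg (G r1 u1 p1 r2 u2 p2 sm sp A1 A2 B1 B2 : ℝ)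
    (hG1 : 1 < G) (hG2 : G ≤ 2)
    (hr1 : 0 < r1) (hu1 : |u1| < 1) (hp1 : 0 < p1)
    (hr2 : 0 < r2) (hu2 : |u2| < 1) (hp2 : 0 < p2)
    (hsm : sm = min (sMin G r1 u1 p1) (sMin G r2 u2 p2))
    (hsp : sp = max (sMax G r1 u1 p1) (sMax G r2 u2 p2))
    (hA1 : A1 = sm * Ec G r1 u1 p1 - mc G r1 u1 p1)
    (hA2 : A2 = sp * Ec G r2 u2 p2 - mc G r2 u2 p2)
    (hB1 : B1 = mc G r1 u1 p1 * (sm - u1) - p1)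
    (hB2 : B2 = mc G r2 u2 p2 * (sp - u2) - p2)
    :
    sp * A1 - B1 < 0 ∧ sm * A2 - B2 < 0 := by
  have hsm₀ : -1 ≤ sm := hsm ▸ le_min (neg_one_lt_sMin hG1 hG2 hr1 hu1 hp1.le).le
    (neg_one_lt_sMin hG1 hG2 hr2 hu2 hp2.le).le
  have hsp₁ : sp ≤ 1 := hsp ▸ max_le (sMax_lt_one hG1 hG2 hr1 hu1 hp1.le).le
    (sMax_lt_one hG1 hG2 hr2 hu2 hp2.le).le
  have h1 := cross_neg_of_le_sMin_of_sMax_le hG1 hG2 hr1 hu1 hp1 hsm₀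
    (hsm ▸ min_le_left _ _) (hsp ▸ le_max_left _ _) hsp₁
  have h2 := cross_neg_of_le_sMin_of_sMax_le hG1 hG2 hr2 hu2 hp2 hsm₀
    (hsm ▸ min_le_right _ _) (hsp ▸ le_max_right _ _) hsp₁
  subst hA1 hA2 hB1 hB2
  constructor <;> linarith

end SRHD1D
end
end

section
/- (Lemma 3.1(vi)) Given two admissible 2D primitive states U⁻ and U⁺ (resolved along a common normal direction) with the HLLC wave speeds s⁻ = min(s_min(U⁻), s_min(U⁺)) and s⁺ = max(s_max(U⁻), s_max(U⁺)), one has 4(A⁻)² - (s⁻A⁻ + B⁻)² > 0 and 4(A⁺)² - (s⁺A⁺ + B⁺)² > 0. -/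
noncomputable section

namespace SRHD2D

/-- Lorentz factor `γ = (1 - u_n² - u_τ²)^(-1/2)`. -/
def lorentz (un ut : ℝ) : ℝ := 1 / Real.sqrt (1 - un ^ 2 - ut ^ 2)

/-- Specific enthalpy `h = 1 + Γ p / ((Γ - 1) ρ)` of a perfect gas. -/
def enthalpy (G r p : ℝ) : ℝ := 1 + G * p / ((G - 1) * r)

/-- Sound speed `c_s = √(Γ p / (ρ h))`. -/
def soundSpeed (G r p : ℝ) : ℝ := Real.sqrt (G * p / (r * enthalpy G r p))

/-- Conserved rest-mass density `D = ρ γ`. -/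
def Dc (r un ut : ℝ) : ℝ := r * lorentz un ut

/-- Normal momentum `m_n = ρ h γ² u_n`. -/
def mn (G r un ut p : ℝ) : ℝ := r * enthalpy G r p * lorentz un ut ^ 2 * un

/-- Tangential momentum `m_τ = ρ h γ² u_τ`. -/
def mt (G r un ut p : ℝ) : ℝ := r * enthalpy G r p * lorentz un ut ^ 2 * ut

/-- Conserved total energy `E = ρ h γ² - p`. -/
def Ec (G r un ut p : ℝ) : ℝ := r * enthalpy G r p * lorentz un ut ^ 2 - p

/-- `σ_s = c_s² / (γ² (1 - c_s²))`. -/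
def sigmaS (G r un ut p : ℝ) : ℝ :=
  soundSpeed G r p ^ 2 / (lorentz un ut ^ 2 * (1 - soundSpeed G r p ^ 2))

/-- Minimum normal characteristic speed. -/
def sMin (G r un ut p : ℝ) : ℝ :=
  (un - Real.sqrt (sigmaS G r un ut p * (1 - un ^ 2 + sigmaS G r un ut p))) /
    (1 + sigmaS G r un ut p)

/-- Maximum normal characteristic speed. -/
def sMax (G r un ut p : ℝ) : ℝ :=
  (un + Real.sqrt (sigmaS G r un ut p * (1 - un ^ 2 + sigmaS G r un ut p))) /
    (1 + sigmaS G r un ut p)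

/-- Core algebraic inequality. -/
lemma core_ineq (u s q : ℝ) (hu : u ^ 2 < 1) (hs : 0 < s) (hq : 0 < q)
    (hq2 : q ^ 2 = s * (1 - u ^ 2 + s)) :
    s * (1 - u ^ 2) * (1 + s - u + q) ^ 2 ≤
      (1 - u ^ 2 + 2 * s) * (u * s + q) * (2 + 2 * s - 2 * u - u * s + q) := by
  have hu1 : u < 1 := by nlinarith [sq_nonneg (u - 1)]
  have hu2 : -1 < u := by nlinarith [sq_nonneg (u + 1)]
  set α : ℝ := 4 * u * (1 + s - u) * (1 + s - u ^ 2) with hα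
  set β : ℝ := 2 * (1 + s - u) * (1 + s - u ^ 2 + s * u ^ 2) with hβ
  have hβpos : 0 < β := by
    have h1 : 0 < 1 + s - u := by linarith
    have h2 : 0 < 1 + s - u ^ 2 + s * u ^ 2 := by nlinarith [sq_nonneg u]
    rw [hβ]; positivity
  have hId : β ^ 2 * (1 - u ^ 2 + s) - s * α ^ 2 =
      4 * (1 - u ^ 2) ^ 2 * (1 + s) ^ 2 * (1 + s - u) ^ 2 * (1 - u ^ 2 + s) := by
    rw [hα, hβ]; ring
  have hDpos : (0:ℝ) < 1 - u ^ 2 + s := by nlinarith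
  have h1 : (s * α) ^ 2 ≤ (β * q) ^ 2 := by
    have e : (β * q) ^ 2 - (s * α) ^ 2
        = s * (β ^ 2 * (1 - u ^ 2 + s) - s * α ^ 2) := by
      rw [mul_pow, mul_pow, hq2]; ring
    have h0 : 0 ≤ s * (β ^ 2 * (1 - u ^ 2 + s) - s * α ^ 2) := by
      rw [hId]; positivity
    linarith [e, h0]
  have h2 : 0 ≤ β * q := le_of_lt (mul_pos hβpos hq)
  have h3 : 0 ≤ s * α + β * q := by nlinarith [h1, h2]
  have key : (1 - u ^ 2 + 2 * s) * (u * s + q) * (2 + 2 * s - 2 * u - u * s + q)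
      - s * (1 - u ^ 2) * (1 + s - u + q) ^ 2
      = s * α + β * q
        + ((1 - u ^ 2 + 2 * s) - s * (1 - u ^ 2)) * (q ^ 2 - s * (1 - u ^ 2 + s)) := by
    rw [hα, hβ]; ring
  rw [hq2] at key
  linarith [key, h3]

/-- `σ_s > 0` for admissible states. -/
lemma sigmaS_pos (G r un ut p : ℝ) (hG1 : 1 < G) (hG2 : G ≤ 2)
    (hr : 0 < r) (hu : un ^ 2 + ut ^ 2 < 1) (hp : 0 < p) :
    0 < sigmaS G r un ut p ∧ soundSpeed G r p ^ 2 < 1 ∧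
      1 + soundSpeed G r p ^ 2 < G ∧
      sigmaS G r un ut p * (1 - soundSpeed G r p ^ 2)
        = soundSpeed G r p ^ 2 * (1 - un ^ 2 - ut ^ 2) := by
  have hu1 : un ^ 2 < 1 := by nlinarith [sq_nonneg ut]
  have ht : 0 < 1 - un ^ 2 - ut ^ 2 := by linarith
  have hlor : lorentz un ut ^ 2 = 1 / (1 - un ^ 2 - ut ^ 2) := by
    rw [lorentz, div_pow, one_pow, Real.sq_sqrt (le_of_lt ht)]
  have hGm1 : 0 < G - 1 := by linarith
  have hh : 0 < enthalpy G r p := by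
    have : 0 < G * p / ((G - 1) * r) := by positivity
    rw [enthalpy]; linarith
  have hHpos : 0 < r * enthalpy G r p := mul_pos hr hh
  have hH : r * enthalpy G r p = r + G * p / (G - 1) := by
    rw [enthalpy]; field_simp
  have hcH : soundSpeed G r p ^ 2 * (r * enthalpy G r p) = G * p := by
    rw [soundSpeed, Real.sq_sqrt (by positivity)]
    field_simp
  have hc0 : 0 < soundSpeed G r p ^ 2 := by
    nlinarith [hcH, hHpos, mul_pos (show (0:ℝ) < G by linarith) hp]
  have hcG : 1 + soundSpeed G r p ^ 2 < G := by
    have h1 : G * p / (G - 1) < r * enthalpy G r p := by rw [hH]; linarith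
    have h2 : soundSpeed G r p ^ 2 * (r * enthalpy G r p)
        < (G - 1) * (r * enthalpy G r p) := by
      rw [hcH]; linarith [(div_lt_iff₀ hGm1).mp h1]
    have h3 : soundSpeed G r p ^ 2 < G - 1 :=
      lt_of_mul_lt_mul_right (by linarith [h2]) (le_of_lt hHpos)
    linarith
  have hc1 : soundSpeed G r p ^ 2 < 1 := by linarith
  have hne : 1 - soundSpeed G r p ^ 2 ≠ 0 := (by linarith : (0:ℝ) < 1 - soundSpeed G r p ^ 2).ne'
  have hσc : sigmaS G r un ut p * (1 - soundSpeed G r p ^ 2)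
      = soundSpeed G r p ^ 2 * (1 - un ^ 2 - ut ^ 2) := by
    rw [sigmaS, hlor]
    field_simp
  refine ⟨?_, hc1, hcG, hσc⟩
  nlinarith [hσc, mul_pos hc0 ht]

set_option maxHeartbeats 1000000 in
lemma left_main (G r un ut p s : ℝ) (hG1 : 1 < G) (hG2 : G ≤ 2)
    (hr : 0 < r) (hu : un ^ 2 + ut ^ 2 < 1) (hp : 0 < p)
    (hs1 : -1 < s) (hs2 : s ≤ sMin G r un ut p) :
    r * enthalpy G r p * lorentz un ut ^ 2 * (s - un) * (2 + s + un)
        - p * (1 + s) ^ 2 < 0 ∧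
      r * enthalpy G r p * lorentz un ut ^ 2 * (s - un) * (2 - s - un)
        + p * (1 - s) ^ 2 < 0 := by
  obtain ⟨hσ0, hc1, hcG, hσc⟩ := sigmaS_pos G r un ut p hG1 hG2 hr hu hp
  have hc0 : 0 < soundSpeed G r p ^ 2 := by
    have hu1 : un ^ 2 < 1 := by nlinarith [sq_nonneg ut]
    have ht : 0 < 1 - un ^ 2 - ut ^ 2 := by linarith
    nlinarith [hσc, mul_pos hσ0 (show (0:ℝ) < 1 - soundSpeed G r p ^ 2 by linarith)]
  set c : ℝ := soundSpeed G r p ^ 2 with hc_def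
  set σ : ℝ := sigmaS G r un ut p with hσ_def
  have hu1 : un ^ 2 < 1 := by nlinarith [sq_nonneg ut]
  have hunlt : un < 1 := by nlinarith [sq_nonneg (un - 1)]
  have hungt : -1 < un := by nlinarith [sq_nonneg (un + 1)]
  have h1u2 : 0 < 1 - un ^ 2 := by linarith
  have ht : 0 < 1 - un ^ 2 - ut ^ 2 := by linarith
  have ht1 : 1 - un ^ 2 - ut ^ 2 ≤ 1 - un ^ 2 := by nlinarith [sq_nonneg ut]
  have htle1 : 1 - un ^ 2 - ut ^ 2 ≤ 1 := by nlinarith [sq_nonneg un, sq_nonneg ut]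
  have hlor : lorentz un ut ^ 2 = 1 / (1 - un ^ 2 - ut ^ 2) := by
    rw [lorentz, div_pow, one_pow, Real.sq_sqrt (le_of_lt ht)]
  have hGm1 : 0 < G - 1 := by linarith
  have hh : 0 < enthalpy G r p := by
    have : 0 < G * p / ((G - 1) * r) := by positivity
    rw [enthalpy]; linarith
  have hHpos : 0 < r * enthalpy G r p := mul_pos hr hh
  have hH : r * enthalpy G r p = r + G * p / (G - 1) := by
    rw [enthalpy]; field_simp
  have hcH : c * (r * enthalpy G r p) = G * p := by
    rw [hc_def, soundSpeed, Real.sq_sqrt (by positivity)]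
    field_simp
  -- wave-speed quantities
  set q : ℝ := Real.sqrt (σ * (1 - un ^ 2 + σ)) with hq_def
  have hDpos : 0 < 1 - un ^ 2 + σ := by linarith
  have hq2 : q ^ 2 = σ * (1 - un ^ 2 + σ) := by
    rw [hq_def, Real.sq_sqrt (by positivity)]
  have hq0 : 0 < q := by rw [hq_def]; exact Real.sqrt_pos.mpr (by positivity)
  have h1σ : 0 < 1 + σ := by linarith
  have hsMin : sMin G r un ut p = (un - q) / (1 + σ) := by
    rw [sMin, ← hσ_def, ← hq_def]
  set s₀ : ℝ := (un - q) / (1 + σ) with hs₀_def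
  have hs₀ : s ≤ s₀ := by rw [← hsMin]; exact hs2
  have hqun : 0 < un * σ + q := by
    have key2 : q ^ 2 - (σ * un) ^ 2 = σ * (1 - un ^ 2) * (1 + σ) := by
      rw [hq2]; ring
    nlinarith [hq0, mul_pos (mul_pos hσ0 h1u2) h1σ]
  have hs₀lt : s₀ < un := by
    rw [hs₀_def, div_lt_iff₀ h1σ]
    linarith [hqun]
  have hsun : s < un := lt_of_le_of_lt hs₀ hs₀lt
  have hs₀1 : s₀ < 1 := lt_trans hs₀lt hunlt
  -- core inequality, translated to s₀
  have hcore := core_ineq un σ q hu1 hσ0 hq0 hq2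
  have e1 : un - s₀ = (un * σ + q) / (1 + σ) := by
    rw [hs₀_def]; field_simp; ring
  have e2 : 2 - un - s₀ = (2 + 2 * σ - 2 * un - un * σ + q) / (1 + σ) := by
    rw [hs₀_def]; field_simp; ring
  have e3 : 1 - s₀ = (1 + σ - un + q) / (1 + σ) := by
    rw [hs₀_def]; field_simp; ring
  have eq2 : (1 - un ^ 2 + 2 * σ) * (un - s₀) * (2 - un - s₀)
      - σ * (1 - un ^ 2) * (1 - s₀) ^ 2
      = ((1 - un ^ 2 + 2 * σ) * (un * σ + q) * (2 + 2 * σ - 2 * un - un * σ + q)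
          - σ * (1 - un ^ 2) * (1 + σ - un + q) ^ 2) / (1 + σ) ^ 2 := by
    rw [e1, e2, e3]; field_simp
  have step2 : σ * (1 - un ^ 2) * (1 - s₀) ^ 2 ≤
      (1 - un ^ 2 + 2 * σ) * (un - s₀) * (2 - un - s₀) := by
    have h0 := div_nonneg (sub_nonneg.mpr hcore) (sq_nonneg (1 + σ))
    rw [← eq2] at h0
    linarith
  -- combine with thermodynamics
  have hGt : (1 - c) * (1 - un ^ 2 + 2 * σ) < G * (1 - un ^ 2) := by
    linarith [hσc, mul_le_mul_of_nonneg_left ht1 (le_of_lt hc0),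
      mul_lt_mul_of_pos_right hcG h1u2]
  have hX1 : 0 < un - s₀ := by linarith
  have hX2 : 0 < 2 - un - s₀ := by linarith
  have hX : 0 < (un - s₀) * (2 - un - s₀) := mul_pos hX1 hX2
  have e4 : (1 - c) * (σ * (1 - un ^ 2) * (1 - s₀) ^ 2)
      = c * (1 - un ^ 2 - ut ^ 2) * ((1 - un ^ 2) * (1 - s₀) ^ 2) := by
    linear_combination ((1 - un ^ 2) * (1 - s₀) ^ 2) * hσc
  have m1 := mul_le_mul_of_nonneg_left step2 (le_of_lt (show (0:ℝ) < 1 - c by linarith))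
  have m2 := mul_lt_mul_of_pos_right hGt hX
  have m3 : c * (1 - un ^ 2 - ut ^ 2) * (1 - un ^ 2) * (1 - s₀) ^ 2
      < G * (1 - un ^ 2) * ((un - s₀) * (2 - un - s₀)) := by linarith [m1, m2, e4]
  have m4 : (1 - un ^ 2) * (c * (1 - un ^ 2 - ut ^ 2) * (1 - s₀) ^ 2)
      < (1 - un ^ 2) * (G * ((un - s₀) * (2 - un - s₀))) := by linarith [m3]
  have hmain : c * (1 - un ^ 2 - ut ^ 2) * (1 - s₀) ^ 2
      < G * ((un - s₀) * (2 - un - s₀)) := lt_of_mul_lt_mul_left m4 (le_of_lt h1u2)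
  -- to pressure form
  have n1 := mul_lt_mul_of_pos_right hmain hHpos
  have e5 : c * (1 - un ^ 2 - ut ^ 2) * (1 - s₀) ^ 2 * (r * enthalpy G r p)
      = G * (p * ((1 - un ^ 2 - ut ^ 2) * (1 - s₀) ^ 2)) := by
    linear_combination ((1 - un ^ 2 - ut ^ 2) * (1 - s₀) ^ 2) * hcH
  have n2 : G * (p * ((1 - un ^ 2 - ut ^ 2) * (1 - s₀) ^ 2))
      < G * ((un - s₀) * (2 - un - s₀) * (r * enthalpy G r p)) := by linarith [n1, e5]
  have n3 : p * ((1 - un ^ 2 - ut ^ 2) * (1 - s₀) ^ 2)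
      < (un - s₀) * (2 - un - s₀) * (r * enthalpy G r p) :=
    lt_of_mul_lt_mul_left n2 (by linarith)
  have hW : r * enthalpy G r p * lorentz un ut ^ 2
      = r * enthalpy G r p / (1 - un ^ 2 - ut ^ 2) := by
    rw [hlor]; ring
  have n4 : p * (1 - s₀) ^ 2
      < r * enthalpy G r p / (1 - un ^ 2 - ut ^ 2) * ((un - s₀) * (2 - un - s₀)) := by
    rw [div_mul_eq_mul_div, lt_div_iff₀ ht]
    linarith [n3]
  have hpW : p < r * enthalpy G r p / (1 - un ^ 2 - ut ^ 2) := by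
    have hp1 : p < r * enthalpy G r p := by
      rw [hH]
      have : p < G * p / (G - 1) := by
        rw [lt_div_iff₀ hGm1]; linarith [mul_pos hp hGm1]
      linarith
    have hH_le : r * enthalpy G r p ≤ r * enthalpy G r p / (1 - un ^ 2 - ut ^ 2) := by
      rw [le_div_iff₀ ht]
      have := mul_le_mul_of_nonneg_left htle1 (le_of_lt hHpos)
      linarith [this]
    linarith
  rw [hW]
  set W : ℝ := r * enthalpy G r p / (1 - un ^ 2 - ut ^ 2) with hW_def
  have hWpos : 0 < W := by rw [hW_def]; positivity
  constructor
  · have f1 : W * (s - un) * (2 + s + un) < 0 := by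
      have h2' : 0 < 2 + s + un := by linarith
      have : W * (s - un) < 0 := mul_neg_of_pos_of_neg hWpos (by linarith)
      exact mul_neg_of_neg_of_pos this h2'
    linarith [f1, mul_pos hp (pow_pos (show (0:ℝ) < 1 + s by linarith) 2)]
  · have mono : 0 ≤ (s₀ - s) * (2 - s - s₀) * (W - p) :=
      mul_nonneg (mul_nonneg (by linarith) (by linarith)) (by linarith [hpW])
    linarith [n4, mono]

lemma neg_one_lt_sMin (G r un ut p : ℝ) (hG1 : 1 < G) (hG2 : G ≤ 2)
    (hr : 0 < r) (hu : un ^ 2 + ut ^ 2 < 1) (hp : 0 < p) :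
    -1 < sMin G r un ut p := by
  obtain ⟨hσ0, hc1, hcG, hσc⟩ := sigmaS_pos G r un ut p hG1 hG2 hr hu hp
  set σ : ℝ := sigmaS G r un ut p with hσ_def
  have hu1 : un ^ 2 < 1 := by nlinarith [sq_nonneg ut]
  have hungt : -1 < un := by nlinarith [sq_nonneg (un + 1)]
  have hDpos : 0 < 1 - un ^ 2 + σ := by nlinarith
  set q : ℝ := Real.sqrt (σ * (1 - un ^ 2 + σ)) with hq_def
  have hq2 : q ^ 2 = σ * (1 - un ^ 2 + σ) := by
    rw [hq_def, Real.sq_sqrt (by positivity)]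
  have hq0 : 0 < q := by rw [hq_def]; exact Real.sqrt_pos.mpr (by positivity)
  have h1σ : 0 < 1 + σ := by linarith
  have key : (1 + σ + un) ^ 2 - q ^ 2 = (1 + un) ^ 2 * (1 + σ) := by
    rw [hq2]; ring
  have hsum : 0 < 1 + σ + un := by linarith
  have hqlt : q < 1 + σ + un := by
    nlinarith [hq0, key, mul_pos (pow_pos (show (0:ℝ) < 1 + un by linarith) 2) h1σ]
  have hsMin : sMin G r un ut p = (un - q) / (1 + σ) := by
    rw [sMin, ← hσ_def, ← hq_def]
  rw [hsMin, lt_div_iff₀ h1σ]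
  linarith

lemma lorentz_neg (un ut : ℝ) : lorentz (-un) ut = lorentz un ut := by
  have h : ((-un) ^ 2 : ℝ) = un ^ 2 := by ring
  rw [lorentz, lorentz, h]

lemma sigmaS_neg (G r un ut p : ℝ) : sigmaS G r (-un) ut p = sigmaS G r un ut p := by
  rw [sigmaS, sigmaS, lorentz_neg]

lemma sMax_eq_neg_sMin (G r un ut p : ℝ) :
    sMax G r un ut p = - sMin G r (-un) ut p := by
  rw [sMax, sMin, sigmaS_neg]
  have h : ((-un) ^ 2 : ℝ) = un ^ 2 := by ring
  rw [h]
  ring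

lemma sMax_lt_one (G r un ut p : ℝ) (hG1 : 1 < G) (hG2 : G ≤ 2)
    (hr : 0 < r) (hu : un ^ 2 + ut ^ 2 < 1) (hp : 0 < p) :
    sMax G r un ut p < 1 := by
  rw [sMax_eq_neg_sMin]
  have h : ((-un) ^ 2 : ℝ) = un ^ 2 := by ring
  have := neg_one_lt_sMin G r (-un) ut p hG1 hG2 hr (by rw [h]; exact hu) hp
  linarith

set_option maxHeartbeats 1000000 in
theorem hllc2d_discriminant_pos (G r1 un1 ut1 p1 r2 un2 ut2 p2 sm sp A1 A2 B1 B2 : ℝ)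
    (hG1 : 1 < G) (hG2 : G ≤ 2)
    (hr1 : 0 < r1) (hu1 : un1 ^ 2 + ut1 ^ 2 < 1) (hp1 : 0 < p1)
    (hr2 : 0 < r2) (hu2 : un2 ^ 2 + ut2 ^ 2 < 1) (hp2 : 0 < p2)
    (hsm : sm = min (sMin G r1 un1 ut1 p1) (sMin G r2 un2 ut2 p2))
    (hsp : sp = max (sMax G r1 un1 ut1 p1) (sMax G r2 un2 ut2 p2))
    (hA1 : A1 = sm * Ec G r1 un1 ut1 p1 - mn G r1 un1 ut1 p1)
    (hA2 : A2 = sp * Ec G r2 un2 ut2 p2 - mn G r2 un2 ut2 p2)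
    (hB1 : B1 = mn G r1 un1 ut1 p1 * (sm - un1) - p1)
    (hB2 : B2 = mn G r2 un2 ut2 p2 * (sp - un2) - p2)
    :
    0 < 4 * A1 ^ 2 - (sm * A1 + B1) ^ 2 ∧ 0 < 4 * A2 ^ 2 - (sp * A2 + B2) ^ 2 := by
  have hu2' : (-un2) ^ 2 + ut2 ^ 2 < 1 := by
    have h : ((-un2) ^ 2 : ℝ) = un2 ^ 2 := by ring
    rw [h]; exact hu2
  have hm1 := neg_one_lt_sMin G r1 un1 ut1 p1 hG1 hG2 hr1 hu1 hp1
  have hm2 := neg_one_lt_sMin G r2 un2 ut2 p2 hG1 hG2 hr2 hu2 hp2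
  have hsm1 : -1 < sm := by rw [hsm]; exact lt_min hm1 hm2
  have hsm2 : sm ≤ sMin G r1 un1 ut1 p1 := by rw [hsm]; exact min_le_left _ _
  obtain ⟨f1, f2⟩ := left_main G r1 un1 ut1 p1 sm hG1 hG2 hr1 hu1 hp1 hsm1 hsm2
  have hq1 := sMax_lt_one G r1 un1 ut1 p1 hG1 hG2 hr1 hu1 hp1
  have hq2 := sMax_lt_one G r2 un2 ut2 p2 hG1 hG2 hr2 hu2 hp2
  have hsp1 : sp < 1 := by rw [hsp]; exact max_lt hq1 hq2
  have hsp2 : sMax G r2 un2 ut2 p2 ≤ sp := by rw [hsp]; exact le_max_right _ _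
  have hsp3 : -sp ≤ sMin G r2 (-un2) ut2 p2 := by
    have h := sMax_eq_neg_sMin G r2 un2 ut2 p2
    have h2 : sMin G r2 (-un2) ut2 p2 = - sMax G r2 un2 ut2 p2 := by rw [h]; ring
    rw [h2]; linarith
  obtain ⟨g1, g2⟩ := left_main G r2 (-un2) ut2 p2 (-sp) hG1 hG2 hr2 hu2' hp2
    (by linarith) hsp3
  rw [lorentz_neg] at g1 g2
  have hE1 : Ec G r1 un1 ut1 p1 = r1 * enthalpy G r1 p1 * lorentz un1 ut1 ^ 2 - p1 := rfl
  have hmn1 : mn G r1 un1 ut1 p1 = r1 * enthalpy G r1 p1 * lorentz un1 ut1 ^ 2 * un1 := rfl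
  have hE2 : Ec G r2 un2 ut2 p2 = r2 * enthalpy G r2 p2 * lorentz un2 ut2 ^ 2 - p2 := rfl
  have hmn2 : mn G r2 un2 ut2 p2 = r2 * enthalpy G r2 p2 * lorentz un2 ut2 ^ 2 * un2 := rfl
  constructor
  · have key : 4 * A1 ^ 2 - (sm * A1 + B1) ^ 2 =
        (-(r1 * enthalpy G r1 p1 * lorentz un1 ut1 ^ 2 * (sm - un1) * (2 + sm + un1)
            - p1 * (1 + sm) ^ 2)) *
          (-(r1 * enthalpy G r1 p1 * lorentz un1 ut1 ^ 2 * (sm - un1) * (2 - sm - un1)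
            + p1 * (1 - sm) ^ 2)) := by
      rw [hA1, hB1, hE1, hmn1]; ring
    rw [key]
    exact mul_pos (by linarith) (by linarith)
  · have key : 4 * A2 ^ 2 - (sp * A2 + B2) ^ 2 =
        (-(r2 * enthalpy G r2 p2 * lorentz un2 ut2 ^ 2 * (-sp - -un2) * (2 + -sp + -un2)
            - p2 * (1 + -sp) ^ 2)) *
          (-(r2 * enthalpy G r2 p2 * lorentz un2 ut2 ^ 2 * (-sp - -un2) * (2 - -sp - -un2)
            + p2 * (1 - -sp) ^ 2)) := by
      rw [hA2, hB2, hE2, hmn2]; ring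
    rw [key]
    exact mul_pos (by linarith) (by linarith)

end SRHD2D
end
end
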